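/- arXiv:math/0511738 — 9 statements merged into one kernel-verified Lean document; each statement's English description precedes it below -/
import Mathlib

section
/- Let n ≥ 2 be an integer. Let R ∈ SL₂(ℝ) be the rotation matrix ((cos(π/n), −sin(π/n)), (sin(π/n), cos(π/n))) and let T ∈ SL₂(ℝ) be the matrix ((1, 2(cos(π/n)+cos(π/5))/sin(π/n)), (0, 1)). Then the trace of T·R⁻¹ equals −2cos(π/5), and (T·R⁻¹)⁵ = I in SL₂(ℝ); in particular the image of T·R⁻¹ in PSL₂(ℝ) is an element of order 5. -/
/-!
Write `N = T·R⁻¹`. Since `R⁻¹ = [[cos, sin], [-sin, cos]]`, the trace of `N` is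
`2 cos(π/n) - b sin(π/n)` for the upper-right entry `b` of `T`, and the choice of `b` makes this
`t = -2 cos(π/5)`. From `4 cos²(π/5) - 2 cos(π/5) - 1 = 0` we get `t² + t = 1`, so the
characteristic polynomial `X² - tX + 1` of `N` divides
`X⁵ - 1 = (X - 1)(X² + (1 + t)X + 1)(X² - tX + 1)`, and Cayley–Hamilton gives `N⁵ = 1`.
The image of `N` in `PSL₂` is nontrivial because a central `±1` has trace `±2`, and
`t = ±2` is incompatible with `t² + t = 1`.
-/

open Real Matrix MatrixGroups

noncomputable section

/-- `PSL₂(ℝ)`: the quotient of `SL₂(ℝ)` by its center `{±1}`. -/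
abbrev PSL2R : Type := SL(2, ℝ) ⧸ Subgroup.center SL(2, ℝ)

open Polynomial in
lemma X_sq_sub_C_mul_X_add_one_dvd_X_pow_five_sub_one {R : Type*} [CommRing R] {t : R}
    (ht : t ^ 2 + t = 1) : X ^ 2 - C t * X + 1 ∣ (X ^ 5 - 1 : R[X]) := by
  have hCt : C t ^ 2 + C t = 1 := by rw [← C_pow, ← C_add, ht, C_1]
  exact ⟨(X - 1) * (X ^ 2 + (1 + C t) * X + 1), by linear_combination (X - 1) * X ^ 2 * hCt⟩

open Polynomial in
lemma Matrix.pow_five_eq_one_of_trace_sq_add_trace {R : Type*} [CommRing R] [Nontrivial R]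
    (A : Matrix (Fin 2) (Fin 2) R) (hdet : A.det = 1) (htr : A.trace ^ 2 + A.trace = 1) :
    A ^ 5 = 1 := by
  obtain ⟨q, hq⟩ := X_sq_sub_C_mul_X_add_one_dvd_X_pow_five_sub_one htr
  have hchar : A.charpoly = X ^ 2 - C A.trace * X + 1 := by
    rw [charpoly_fin_two, hdet, C_1]
  have hA := congrArg (aeval A) hq
  rw [← hchar, map_mul, aeval_self_charpoly, zero_mul, map_sub, map_pow, aeval_X, map_one] at hA
  exact sub_eq_zero.mp hA

namespace Matrix.SpecialLinearGroup

variable {R : Type*} [CommRing R] (g : SL(2, R))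

lemma pow_five_eq_one_of_trace_sq_add_trace [Nontrivial R]
    (htr : (g : Matrix (Fin 2) (Fin 2) R).trace ^ 2 + (g : Matrix (Fin 2) (Fin 2) R).trace = 1) :
    g ^ 5 = 1 :=
  Subtype.ext <| by
    rw [Matrix.SpecialLinearGroup.coe_pow, Matrix.SpecialLinearGroup.coe_one]
    exact Matrix.pow_five_eq_one_of_trace_sq_add_trace _ g.property htr

lemma notMem_center_of_trace_sq_add_trace (h5 : (5 : R) ≠ 0)
    (htr : (g : Matrix (Fin 2) (Fin 2) R).trace ^ 2 + (g : Matrix (Fin 2) (Fin 2) R).trace = 1) :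
    g ∉ Subgroup.center SL(2, R) := by
  intro hg
  obtain ⟨r, hr, hgr⟩ := Matrix.SpecialLinearGroup.mem_center_iff.mp hg
  rw [Fintype.card_fin] at hr
  rw [← hgr, trace_fin_two] at htr
  simp only [scalar_apply, diagonal_apply_eq] at htr
  -- `htr` and `r ^ 2 = 1` give `2r + 3 = 0`, and then `4r² = 9` contradicts `r² = 1`.
  exact h5 (by linear_combination (3 - 2 * r) * (htr - 4 * hr) + 4 * hr)

lemma orderOf_mk_center_eq_five [Nontrivial R] (h5 : (5 : R) ≠ 0)
    (htr : (g : Matrix (Fin 2) (Fin 2) R).trace ^ 2 + (g : Matrix (Fin 2) (Fin 2) R).trace = 1) :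
    orderOf (QuotientGroup.mk g : SL(2, R) ⧸ Subgroup.center SL(2, R)) = 5 := by
  have : Fact (Nat.Prime 5) := ⟨Nat.prime_five⟩
  refine orderOf_eq_prime ?_ ?_
  · rw [← QuotientGroup.mk_pow, pow_five_eq_one_of_trace_sq_add_trace g htr, QuotientGroup.mk_one]
  · rw [Ne, QuotientGroup.eq_one_iff]
    exact notMem_center_of_trace_sq_add_trace g h5 htr

end Matrix.SpecialLinearGroup

lemma trace_unipotent_mul_rotation_inv (θ b : ℝ) (T R : SL(2, ℝ))
    (hR : (R : Matrix (Fin 2) (Fin 2) ℝ) = !![cos θ, -sin θ; sin θ, cos θ])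
    (hT : (T : Matrix (Fin 2) (Fin 2) ℝ) = !![1, b; 0, 1]) :
    Matrix.trace ((T * R⁻¹ : SL(2, ℝ)) : Matrix (Fin 2) (Fin 2) ℝ) = 2 * cos θ - b * sin θ := by
  rw [Matrix.SpecialLinearGroup.coe_mul, Matrix.SpecialLinearGroup.coe_inv, hR, hT,
    adjugate_fin_two_of, mul_fin_two, trace_fin_two_of]
  ring

lemma sin_pi_div_natCast_ne_zero {n : ℕ} (hn : 2 ≤ n) : sin (π / n) ≠ 0 := by
  have hn' : (2 : ℝ) ≤ n := by exact_mod_cast hn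
  refine (sin_pos_of_pos_of_lt_pi (by positivity) ?_).ne'
  calc π / n ≤ π / 2 := div_le_div_of_nonneg_left pi_pos.le two_pos hn'
    _ < π := by linarith [pi_pos]

/-- For `R` the rotation by `π/n` and `T = [[1, 2(cos(π/n)+cos(π/5))/sin(π/n)], [0,1]]` in
`SL₂(ℝ)`, the product `T·R⁻¹` has trace `-2cos(π/5)`, satisfies `(T·R⁻¹)⁵ = 1` in `SL₂(ℝ)`,
and its image in `PSL₂(ℝ)` has order `5`. -/
theorem elliptic_element_of_order_five
    (n : ℕ) (hn : 2 ≤ n)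
    (R T : SL(2, ℝ))
    (hR : (R : Matrix (Fin 2) (Fin 2) ℝ) =
      !![Real.cos (π / n), -Real.sin (π / n); Real.sin (π / n), Real.cos (π / n)])
    (hT : (T : Matrix (Fin 2) (Fin 2) ℝ) =
      !![1, 2 * (Real.cos (π / n) + Real.cos (π / 5)) / Real.sin (π / n); 0, 1]) :
    Matrix.trace ((T * R⁻¹ : SL(2, ℝ)) : Matrix (Fin 2) (Fin 2) ℝ) = -2 * Real.cos (π / 5) ∧
    (T * R⁻¹) ^ 5 = 1 ∧
    orderOf (QuotientGroup.mk (T * R⁻¹) : PSL2R) = 5 := by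
  have htr : Matrix.trace ((T * R⁻¹ : SL(2, ℝ)) : Matrix (Fin 2) (Fin 2) ℝ) =
      -2 * cos (π / 5) := by
    rw [trace_unipotent_mul_rotation_inv _ _ T R hR hT]
    field_simp [sin_pi_div_natCast_ne_zero hn]
    ring
  have hquad : (-2 * cos (π / 5)) ^ 2 + -2 * cos (π / 5) = 1 := by
    linear_combination quadratic_root_cos_pi_div_five
  rw [← htr] at hquad
  exact ⟨htr, Matrix.SpecialLinearGroup.pow_five_eq_one_of_trace_sq_add_trace _ hquad,
    Matrix.SpecialLinearGroup.orderOf_mk_center_eq_five _ (by norm_num) hquad⟩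

end
end

section
/- Let n ≥ 2 be an integer. Let R ∈ SL₂(ℝ) be the rotation matrix ((cos(π/n), −sin(π/n)), (sin(π/n), cos(π/n))) and let T ∈ SL₂(ℝ) be the matrix ((1, 2(cos(π/n)+cos(π/4))/sin(π/n)), (0, 1)). Then the trace of T·R⁻¹ equals −√2, and (T·R⁻¹)⁴ = −I in SL₂(ℝ); in particular the image of T·R⁻¹ in PSL₂(ℝ) is an element of order 4. -/
open Real Matrix MatrixGroups

noncomputable section

instance : Fact (Even (Fintype.card (Fin 2))) := ⟨by simp⟩

private lemma aux_pow_four (a b s q : ℝ) (hs2 : s ^ 2 = 2)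
    (hq : q * b = 1 + a ^ 2 + s * a) :
    (!![-(a+s), q; -b, a] : Matrix (Fin 2) (Fin 2) ℝ) ^ 4 = -1 := by
  have h2 : (!![-(a+s), q; -b, a] : Matrix (Fin 2) (Fin 2) ℝ) * !![-(a+s), q; -b, a]
      = !![s*a+1, -(s*q); s*b, -(s*a+1)] := by
    ext i j
    fin_cases i <;> fin_cases j <;>
      simp [Matrix.mul_apply, Fin.sum_univ_two]
    all_goals try ring
    all_goals nlinarith [hq, hs2]
  have h4 : (!![s*a+1, -(s*q); s*b, -(s*a+1)] : Matrix (Fin 2) (Fin 2) ℝ) *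
      !![s*a+1, -(s*q); s*b, -(s*a+1)] = -1 := by
    ext i j
    fin_cases i <;> fin_cases j <;>
      simp [Matrix.mul_apply, Fin.sum_univ_two, Matrix.one_apply]
    all_goals try ring
    all_goals linear_combination (-(1 + s * a)) * hs2 - s ^ 2 * hq
  calc (!![-(a+s), q; -b, a] : Matrix (Fin 2) (Fin 2) ℝ) ^ 4
      = (!![-(a+s), q; -b, a] * !![-(a+s), q; -b, a]) *
        (!![-(a+s), q; -b, a] * !![-(a+s), q; -b, a]) := by
        rw [pow_succ, pow_succ, pow_succ, pow_one, mul_assoc]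
    _ = -1 := by rw [h2, h4]

/-- For `R` the rotation by `π/n` and `T = [[1, 2(cos(π/n)+cos(π/4))/sin(π/n)], [0,1]]` in
`SL₂(ℝ)`, the product `T·R⁻¹` has trace `-√2`, satisfies `(T·R⁻¹)⁴ = -I` in `SL₂(ℝ)`,
and its image in `PSL₂(ℝ)` has order `4`. -/
theorem elliptic_element_of_order_four
    (n : ℕ) (hn : 2 ≤ n)
    (R T : SL(2, ℝ))
    (hR : (R : Matrix (Fin 2) (Fin 2) ℝ) =
      !![Real.cos (π / n), -Real.sin (π / n); Real.sin (π / n), Real.cos (π / n)])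
    (hT : (T : Matrix (Fin 2) (Fin 2) ℝ) =
      !![1, 2 * (Real.cos (π / n) + Real.cos (π / 4)) / Real.sin (π / n); 0, 1]) :
    Matrix.trace ((T * R⁻¹ : SL(2, ℝ)) : Matrix (Fin 2) (Fin 2) ℝ) = -Real.sqrt 2 ∧
    (T * R⁻¹) ^ 4 = -1 ∧
    orderOf (QuotientGroup.mk (T * R⁻¹) : PSL2R) = 4 := by
  set a := Real.cos (π / n) with ha'
  set b := Real.sin (π / n) with hb'
  set s := Real.sqrt 2 with hs'
  have hs2 : s ^ 2 = 2 := Real.sq_sqrt (by norm_num)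
  have hab : a ^ 2 + b ^ 2 = 1 := by
    rw [ha', hb']; rw [add_comm]; exact Real.sin_sq_add_cos_sq _
  have hbpos : 0 < b := by
    rw [hb']
    apply Real.sin_pos_of_pos_of_lt_pi
    · positivity
    · calc π / n ≤ π / 2 := by
            apply div_le_div_of_nonneg_left Real.pi_pos.le (by norm_num)
            exact_mod_cast hn
        _ < π := by linarith [Real.pi_pos]
  have hb0 : b ≠ 0 := hbpos.ne'
  have hc4 : Real.cos (π / 4) = s / 2 := by
    rw [Real.cos_pi_div_four, hs']
  have hM : ((T * R⁻¹ : SL(2, ℝ)) : Matrix (Fin 2) (Fin 2) ℝ) =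
      !![-(a + s), (1 + a ^ 2 + s * a) / b; -b, a] := by
    rw [Matrix.SpecialLinearGroup.coe_mul, Matrix.SpecialLinearGroup.coe_inv, hR, hT,
      Matrix.adjugate_fin_two, hc4]
    ext i j
    fin_cases i <;> fin_cases j <;>
      simp [Matrix.mul_apply, Fin.sum_univ_two]
    all_goals field_simp
    all_goals nlinarith [hab, sq_nonneg a, sq_nonneg b]
  have hq : (1 + a ^ 2 + s * a) / b * b = 1 + a ^ 2 + s * a := by
    field_simp
  have hx4m : (((T * R⁻¹) ^ 4 : SL(2, ℝ)) : Matrix (Fin 2) (Fin 2) ℝ) = -1 := by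
    rw [Matrix.SpecialLinearGroup.coe_pow, hM]
    exact aux_pow_four a b s _ hs2 hq
  have hx4 : (T * R⁻¹) ^ 4 = (-1 : SL(2, ℝ)) := by
    apply Subtype.ext
    rw [hx4m]
    rw [Matrix.SpecialLinearGroup.coe_neg, Matrix.SpecialLinearGroup.coe_one]
  refine ⟨?_, hx4, ?_⟩
  · rw [Matrix.trace_fin_two, hM]
    simp
  · have hneg1 : (-1 : SL(2, ℝ)) ∈ Subgroup.center SL(2, ℝ) := by
      rw [Matrix.SpecialLinearGroup.mem_center_iff]
      refine ⟨-1, by norm_num, ?_⟩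
      ext i j
      simp only [Matrix.SpecialLinearGroup.coe_neg, Matrix.SpecialLinearGroup.coe_one,
        Matrix.scalar_apply, Matrix.diagonal_apply, Matrix.neg_apply, Matrix.one_apply]
      split <;> simp
    have h4q : (QuotientGroup.mk (T * R⁻¹) : PSL2R) ^ 4 = 1 := by
      rw [← QuotientGroup.mk_pow, hx4]
      exact (QuotientGroup.eq_one_iff _).mpr hneg1
    have h2q : (QuotientGroup.mk (T * R⁻¹) : PSL2R) ^ 2 ≠ 1 := by
      intro h
      rw [← QuotientGroup.mk_pow, QuotientGroup.eq_one_iff] at h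
      rw [Matrix.SpecialLinearGroup.mem_center_iff] at h
      obtain ⟨r, hr, hsc⟩ := h
      have h1 : (((T * R⁻¹) ^ 4 : SL(2, ℝ)) : Matrix (Fin 2) (Fin 2) ℝ) = 1 := by
        have : ((T * R⁻¹) ^ 4 : SL(2, ℝ)) = ((T * R⁻¹) ^ 2) * ((T * R⁻¹) ^ 2) := by
          rw [← pow_add]
        rw [this, Matrix.SpecialLinearGroup.coe_mul, ← hsc, ← _root_.map_mul]
        simp only [Fintype.card_fin] at hr
        rw [show r * r = r ^ 2 by ring, hr, _root_.map_one]
      rw [hx4m] at h1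
      have := congr_fun (congr_fun h1 0) 0
      norm_num [Matrix.one_apply] at this
    have hd4 : orderOf (QuotientGroup.mk (T * R⁻¹) : PSL2R) ∣ 4 :=
      orderOf_dvd_of_pow_eq_one h4q
    have hpow := pow_orderOf_eq_one (QuotientGroup.mk (T * R⁻¹) : PSL2R)
    set d := orderOf (QuotientGroup.mk (T * R⁻¹) : PSL2R) with hd
    have hdpos : 0 < d := by
      rw [hd]
      exact orderOf_pos_iff.mpr (isOfFinOrder_iff_pow_eq_one.mpr ⟨4, by norm_num, h4q⟩)
    have hdle : d ≤ 4 := Nat.le_of_dvd (by norm_num) hd4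
    interval_cases d
    · exact absurd (by rw [pow_one] at hpow; rw [sq, hpow, one_mul]) h2q
    · exact absurd hpow h2q
    · norm_num at hd4
    · rfl

end
end

section
/- Let n ≥ 7 be an odd integer not divisible by 5, and set R = cos(π/n) + cos(π/5). If a, b are real numbers satisfying a·cos(3π/(2n)) − b·cos(5π/(2n)) = R − 1 and a·sin(3π/(2n)) − b·sin(5π/(2n)) = R·tan(π/(2n)), then a = 2R·b. -/
open Real

/-- The key identity in the proof that the horizontal cylinders of the translation surface
obtained by unfolding the billiard table `T(5,n,∞)` all have the same modulus: with
`R = cos(π/n) + cos(π/5)`, if `a·cos(3π/2n) − b·cos(5π/2n) = R − 1` and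
`a·sin(3π/2n) − b·sin(5π/2n) = R·tan(π/2n)`, then `a = 2R·b`. -/
theorem billiard_T5n_equal_moduli_identity
    (n : ℕ) (hn : 7 ≤ n) (hodd : Odd n) (h5 : ¬ (5 ∣ n))
    (R a b : ℝ) (hR : R = Real.cos (π / n) + Real.cos (π / 5))
    (h1 : a * Real.cos (3 * π / (2 * n)) - b * Real.cos (5 * π / (2 * n)) = R - 1)
    (h2 : a * Real.sin (3 * π / (2 * n)) - b * Real.sin (5 * π / (2 * n))
        = R * Real.tan (π / (2 * n))) :
    a = 2 * R * b := by
  have hn0 : (0:ℝ) < (n:ℝ) := by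
    have : 0 < n := lt_of_lt_of_le (by norm_num) hn
    exact_mod_cast this
  set t : ℝ := π / (2 * n) with ht_def
  have e3 : 3 * π / (2 * n) = 3 * t := by rw [ht_def]; ring
  have e5 : 5 * π / (2 * n) = 5 * t := by rw [ht_def]; ring
  have e2 : π / n = 2 * t := by rw [ht_def]; field_simp
  rw [e3, e5] at h1 h2
  rw [e2] at hR
  have ht0 : 0 < t := by
    rw [ht_def]; positivity
  have htlt : t < π / 2 := by
    have h7 : (7:ℝ) ≤ (n:ℝ) := by exact_mod_cast hn
    rw [ht_def, div_lt_div_iff₀ (by positivity) (by norm_num)]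
    nlinarith [Real.pi_pos]
  have hc : 0 < Real.cos t := Real.cos_pos_of_mem_Ioo ⟨by linarith, htlt⟩
  have hs : 0 < Real.sin t := Real.sin_pos_of_pos_of_lt_pi ht0
    (lt_trans htlt (by linarith [Real.pi_pos]))
  have hp : Real.sin t ^ 2 + Real.cos t ^ 2 = 1 := Real.sin_sq_add_cos_sq t
  -- golden ratio relation for cos(π/5)
  have hg : 4 * Real.cos (π / 5) ^ 2 - 2 * Real.cos (π / 5) - 1 = 0 := by
    rw [Real.cos_pi_div_five]
    have h5' : Real.sqrt 5 ^ 2 = 5 := Real.sq_sqrt (by norm_num)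
    nlinarith [h5']
  -- multiple angle formulas
  have e2c : Real.cos (2 * t) = 2 * Real.cos t ^ 2 - 1 := Real.cos_two_mul t
  have e3s : Real.sin (3 * t) = 3 * Real.sin t - 4 * Real.sin t ^ 3 :=
    Real.sin_three_mul t
  have e3c : Real.cos (3 * t) = 4 * Real.cos t ^ 3 - 3 * Real.cos t :=
    Real.cos_three_mul t
  have e5s : Real.sin (5 * t) = 16 * Real.sin t ^ 5 - 20 * Real.sin t ^ 3 + 5 * Real.sin t := by
    rw [show (5:ℝ) * t = 2 * t + 3 * t by ring, Real.sin_add, Real.cos_two_mul,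
      Real.sin_two_mul, Real.sin_three_mul, Real.cos_three_mul]
    linear_combination (8 * Real.sin t + 8 * Real.sin t * Real.cos t ^ 2
      - 16 * Real.sin t ^ 3) * hp
  have e5c : Real.cos (5 * t) = 16 * Real.cos t ^ 5 - 20 * Real.cos t ^ 3 + 5 * Real.cos t := by
    rw [show (5:ℝ) * t = 2 * t + 3 * t by ring, Real.cos_add, Real.cos_two_mul,
      Real.sin_two_mul, Real.sin_three_mul, Real.cos_three_mul]
    linear_combination (2 * Real.cos t - 8 * Real.cos t ^ 3
      + 8 * Real.sin t ^ 2 * Real.cos t) * hp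
  -- the key trigonometric identity
  have K : (R - 1) * Real.cos t * (Real.sin (5 * t) - 2 * R * Real.sin (3 * t))
      + R * Real.sin t * (2 * R * Real.cos (3 * t) - Real.cos (5 * t)) = 0 := by
    rw [e3s, e3c, e5s, e5c, hR, e2c]
    set s := Real.sin t
    set c := Real.cos t
    set g := Real.cos (π / 5)
    linear_combination (24 * s * c - 28 * s * c * g + 8 * s * c * g ^ 2
      - 24 * s * c ^ 3 + 16 * s * c ^ 3 * g - 32 * s ^ 3 * c
      + 16 * s ^ 3 * c * g + 32 * s ^ 3 * c ^ 3) * hp + (- s * c) * hg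
  -- multiply h2 by cos t
  have h2' : a * Real.sin (3 * t) * Real.cos t - b * Real.sin (5 * t) * Real.cos t
      = R * Real.sin t := by
    have := h2
    rw [Real.tan_eq_sin_div_cos] at this
    field_simp at this ⊢
    linear_combination this
  have hs2 : Real.sin (2 * t) = Real.sin (5 * t) * Real.cos (3 * t)
      - Real.cos (5 * t) * Real.sin (3 * t) := by
    rw [← Real.sin_sub]; ring_nf
  have hkey : (a - 2 * R * b) * (Real.sin (2 * t) * Real.cos t) = 0 := by
    linear_combination (Real.cos t * (Real.sin (5 * t) - 2 * R * Real.sin (3 * t))) * h1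
      + (2 * R * Real.cos (3 * t) - Real.cos (5 * t)) * h2' + K
      + ((a - 2 * R * b) * Real.cos t) * hs2
  have hsin2 : 0 < Real.sin (2 * t) := by
    rw [Real.sin_two_mul]; positivity
  have hne : Real.sin (2 * t) * Real.cos t ≠ 0 := by positivity
  have := mul_eq_zero.mp hkey
  rcases this with h | h
  · linarith
  · exact absurd h hne
end

section
/- Let n ≥ 2 be an integer not divisible by 5, and let c = cos(π/n). Then the minimal polynomial of c + cos(π/5) over the subfield ℚ(c) of ℝ is X² − (2c + 1/2)·X + (c² + c/2 − 1/4). -/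
/-!
Since `cos (π / 5) = (1 + √5) / 4` is a root of `X² - X/2 - 1/4`, the number `c + cos (π / 5)` is a
root of that quadratic shifted by `c`, and everything reduces to `cos (π / 5) ∉ ℚ(c)`.
If it were in `ℚ(c) ⊆ ℚ(ζ)`, with `ζ` a primitive `2n`-th root of unity, a primitive fifth root of
unity `ω` would satisfy `ω + ω⁻¹ = 4 cos² (π / 5) - 2 ∈ ℚ(ζ)`, so `[ℚ(ζ, ω) : ℚ] ≤ 2 φ(2n)`.
But as `5 ∤ 2n`, the field `ℚ(ζ, ω)` contains a primitive `10n`-th root of unity, hence has degree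
at least `φ(10n) = 4 φ(2n)` over `ℚ`.
-/

open Real Polynomial IntermediateField

theorem minpoly_eq_of_natDegree_eq_two {K L : Type*} [Field K] [Ring L] [Nontrivial L]
    [Algebra K L] {x : L} {q : K[X]} (hmonic : q.Monic) (hdeg : q.natDegree = 2)
    (hq : aeval x q = 0) (hx : x ∉ (algebraMap K L).range) : minpoly K x = q := by
  have hint : IsIntegral K x := ⟨q, hmonic, hq⟩
  refine (eq_of_monic_of_dvd_of_natDegree_le (minpoly.monic hint) hmonic (minpoly.dvd K x hq)
    ?_).symm
  rw [hdeg]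
  exact (minpoly.two_le_natDegree_iff hint).2 hx

theorem minpoly_cos_pi_div_five {K : Type*} [Field K] [Algebra K ℝ]
    (h : cos (π / 5) ∉ (algebraMap K ℝ).range) :
    minpoly K (cos (π / 5)) = X ^ 2 - C (1 / 2) * X - C (1 / 4) := by
  refine minpoly_eq_of_natDegree_eq_two (by monicity!) (by compute_degree!) ?_ h
  have hsqrt : √5 ^ 2 = 5 := sq_sqrt (by norm_num)
  simp only [map_sub, map_mul, map_pow, aeval_X, aeval_C, map_div₀, map_one, map_ofNat,
    cos_pi_div_five]
  linear_combination hsqrt / 16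

theorem natDegree_minpoly_le_two_of_add_inv_eq {K L : Type*} [Field K] [Field L] [Algebra K L]
    {x : L} (hx : x ≠ 0) {a : K} (h : x + x⁻¹ = algebraMap K L a) :
    (minpoly K x).natDegree ≤ 2 := by
  have hmonic : (X ^ 2 - C a * X + 1 : K[X]).Monic := by monicity!
  have hroot : aeval x (X ^ 2 - C a * X + 1 : K[X]) = 0 := by
    simp only [map_add, map_sub, map_mul, map_pow, aeval_X, aeval_C, map_one]
    rw [← h]
    field_simp
    ring
  calc (minpoly K x).natDegree ≤ (X ^ 2 - C a * X + 1 : K[X]).natDegree :=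
        natDegree_le_of_dvd (minpoly.dvd K x hroot) hmonic.ne_zero
    _ = 2 := by compute_degree!

theorem IsPrimitiveRoot.finrank_adjoin_rat {L : Type*} [Field L] [CharZero L] {m : ℕ} {ζ : L}
    (hζ : IsPrimitiveRoot ζ m) (hm : 0 < m) : Module.finrank ℚ ℚ⟮ζ⟯ = m.totient := by
  rw [adjoin.finrank (hζ.isIntegral hm).tower_top, ← cyclotomic_eq_minpoly_rat hζ hm,
    natDegree_cyclotomic]

theorem IsPrimitiveRoot.totient_lcm_le_finrank_mul_natDegree_minpoly {L : Type*} [Field L]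
    [CharZero L] {F : IntermediateField ℚ L} [FiniteDimensional ℚ F] {m k : ℕ} {ζ ω : L}
    (hζ : IsPrimitiveRoot ζ m) (hζF : ζ ∈ F) (hω : IsPrimitiveRoot ω k) :
    (m.lcm k).totient ≤ Module.finrank ℚ F * (minpoly F ω).natDegree := by
  rcases Nat.eq_zero_or_pos m with rfl | hm
  · simp
  rcases Nat.eq_zero_or_pos k with rfl | hk
  · simp
  have hωint : IsIntegral F ω := (hω.isIntegral hk).tower_top
  have : FiniteDimensional F F⟮ω⟯ := adjoin.finiteDimensional hωint
  have hfinrank : Module.finrank ℚ (F⟮ω⟯.restrictScalars ℚ) =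
      Module.finrank ℚ F * (minpoly F ω).natDegree := by
    rw [← adjoin.finrank hωint]
    exact (Module.finrank_mul_finrank ℚ F F⟮ω⟯).symm
  have : FiniteDimensional ℚ (F⟮ω⟯.restrictScalars ℚ) := FiniteDimensional.trans ℚ F F⟮ω⟯
  have hζE : IsPrimitiveRoot (⟨ζ, (F⟮ω⟯).algebraMap_mem ⟨ζ, hζF⟩⟩ : F⟮ω⟯.restrictScalars ℚ) m :=
    IsPrimitiveRoot.coe_submonoidClass_iff.1 hζ
  have hωE : IsPrimitiveRoot (⟨ω, mem_adjoin_simple_self F ω⟩ : F⟮ω⟯.restrictScalars ℚ) k :=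
    IsPrimitiveRoot.coe_submonoidClass_iff.1 hω
  exact hfinrank ▸ hζE.lcm_totient_le_finrank hωE (cyclotomic.irreducible_rat (Nat.lcm_pos hm hk))

theorem Complex.two_cos_two_pi_div (N : ℕ) :
    ((2 * Real.cos (2 * π / N) : ℝ) : ℂ) =
      Complex.exp (2 * π * Complex.I / N) + (Complex.exp (2 * π * Complex.I / N))⁻¹ := by
  rw [← Complex.exp_neg]
  push_cast
  rw [Complex.two_cos]
  ring_nf

theorem cos_pi_div_five_notMem_adjoin_cos_pi_div {n : ℕ} (h5 : ¬ 5 ∣ n) :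
    cos (π / 5) ∉ ℚ⟮cos (π / n)⟯ := by
  intro hmem
  have hn : n ≠ 0 := by rintro rfl; exact h5 (dvd_zero 5)
  set ζ := Complex.exp (2 * π * Complex.I / (2 * n : ℕ))
  set ω := Complex.exp (2 * π * Complex.I / (5 : ℕ))
  have hζ : IsPrimitiveRoot ζ (2 * n) := Complex.isPrimitiveRoot_exp _ (by omega)
  have hω : IsPrimitiveRoot ω 5 := Complex.isPrimitiveRoot_exp _ (by norm_num)
  have : FiniteDimensional ℚ ℚ⟮ζ⟯ := adjoin.finiteDimensional (hζ.isIntegral (by omega)).tower_top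
  have hcos_n : ((cos (π / n) : ℝ) : ℂ) ∈ ℚ⟮ζ⟯ := by
    have h := Complex.two_cos_two_pi_div (2 * n)
    rw [show 2 * π / (2 * n : ℕ) = π / n by push_cast; field_simp] at h
    rw [show ((cos (π / n) : ℝ) : ℂ) = (ζ + ζ⁻¹) / 2 by rw [← h]; push_cast; ring]
    have hζmem := mem_adjoin_simple_self ℚ ζ
    exact div_mem (add_mem hζmem (inv_mem hζmem)) (ofNat_mem _ 2)
  have hcos_5 : ((cos (π / 5) : ℝ) : ℂ) ∈ ℚ⟮ζ⟯ := by
    have hle : ℚ⟮cos (π / n)⟯.map (Complex.ofRealAm.restrictScalars ℚ) ≤ ℚ⟮ζ⟯ := by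
      rw [adjoin_map, Set.image_singleton, adjoin_simple_le_iff]
      exact hcos_n
    exact hle ⟨_, hmem, rfl⟩
  have hω_add : ω + ω⁻¹ = algebraMap ℚ⟮ζ⟯ ℂ
      ⟨4 * (cos (π / 5) : ℂ) ^ 2 - 2, sub_mem (mul_mem (ofNat_mem _ 4) (pow_mem hcos_5 2))
        (ofNat_mem _ 2)⟩ := by
    rw [IntermediateField.algebraMap_apply, ← Complex.two_cos_two_pi_div 5,
      show 2 * π / (5 : ℕ) = 2 * (π / 5) by push_cast; ring, cos_two_mul]
    push_cast
    ring
  have hdeg := natDegree_minpoly_le_two_of_add_inv_eq (hω.ne_zero (by norm_num)) hω_add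
  have hcop : Nat.Coprime (2 * n) 5 :=
    Nat.Coprime.mul_left (by norm_num) (Nat.prime_five.coprime_iff_not_dvd.mpr h5).symm
  have hbound := hζ.totient_lcm_le_finrank_mul_natDegree_minpoly (mem_adjoin_simple_self ℚ ζ) hω
  rw [hζ.finrank_adjoin_rat (by omega), hcop.lcm_eq_mul, Nat.totient_mul hcop,
    Nat.totient_prime Nat.prime_five] at hbound
  have hpos : 0 < (2 * n).totient := Nat.totient_pos.mpr (by omega)
  nlinarith

theorem minpoly_cos_pi_n_plus_cos_pi_5_general
    (n : ℕ) (h5 : ¬ (5 ∣ n))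
    (c : ℝ) (hc : c = Real.cos (π / n)) :
    (minpoly (IntermediateField.adjoin ℚ ({c} : Set ℝ)) (c + Real.cos (π / 5))).map
        (algebraMap (IntermediateField.adjoin ℚ ({c} : Set ℝ)) ℝ)
      = X ^ 2 - C (2 * c + 1 / 2) * X + C (c ^ 2 + c / 2 - 1 / 4) := by
  set K := IntermediateField.adjoin ℚ ({c} : Set ℝ)
  have hcos : cos (π / 5) ∉ (algebraMap K ℝ).range := by
    rintro ⟨y, hy⟩
    exact cos_pi_div_five_notMem_adjoin_cos_pi_div h5 (hc ▸ hy ▸ y.2)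
  have hshift : c + cos (π / 5) = cos (π / 5) + algebraMap K ℝ ⟨c, mem_adjoin_simple_self ℚ c⟩ :=
    add_comm _ _
  rw [hshift, minpoly.add_algebraMap, minpoly_cos_pi_div_five hcos, Polynomial.map_comp]
  simp only [Polynomial.map_sub, Polynomial.map_mul, Polynomial.map_pow, Polynomial.map_X,
    Polynomial.map_C, map_div₀, map_one, map_ofNat, IntermediateField.algebraMap_apply,
    sub_comp, mul_comp, pow_comp, X_comp, C_comp]
  simp only [div_eq_mul_inv, C_add, C_sub, C_mul, C_pow, C_ofNat, C_1]
  ring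

/-- Let `n ≥ 2` with `5 ∤ n` and `c = cos(π/n)`.  The minimal polynomial of `c + cos(π/5)`
over the subfield `ℚ(c) ⊆ ℝ` is `X² − (2c + 1/2)·X + (c² + c/2 − 1/4)` (stated via its image
under the injective map `Polynomial ℚ(c) → Polynomial ℝ`). -/
theorem minpoly_cos_pi_n_plus_cos_pi_5
    (n : ℕ) (hn : 2 ≤ n) (h5 : ¬ (5 ∣ n))
    (c : ℝ) (hc : c = Real.cos (π / n)) :
    (minpoly (IntermediateField.adjoin ℚ ({c} : Set ℝ)) (c + Real.cos (π / 5))).map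
        (algebraMap (IntermediateField.adjoin ℚ ({c} : Set ℝ)) ℝ)
      = X ^ 2 - C (2 * c + 1 / 2) * X + C (c ^ 2 + c / 2 - 1 / 4) :=
  minpoly_cos_pi_n_plus_cos_pi_5_general n h5 c hc
end

section
/- Let n ≥ 3 be an odd integer, and let c = cos(π/n). Then the minimal polynomial of 2c + √2 over the subfield ℚ(c) of ℝ is X² − 4c·X + (4c² − 2). -/
/-!
Since `√2 ^ 2 = 2`, the minimal polynomial of `2c + √2` over `F = ℚ(c)` is `(X - 2c)² - 2`
as soon as `√2 ∉ F`. To see this, put `ζ = exp(πi/(4n))`, so that `c = (ω + ω⁻¹)/2` with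
`ω = ζ⁴ = exp(πi/n)` and `√2 = η + η⁻¹` with `η = ζⁿ = exp(πi/4)`. The automorphism
`ζ ↦ ζ^(2n² + 1)` of the cyclotomic field `ℚ(ζ)` fixes `ω` (as `ωⁿ = -1`) and sends `η` to
`η³` (as `η⁴ = -1`), hence fixes `c` and maps `√2` to `η³ + η⁻³ = -√2`.
-/

open Real Polynomial IntermediateField

noncomputable section

theorem minpoly_eq_X_sq_sub_C_of_sq_eq {F L : Type*} [Field F] [Field L] [Algebra F L]
    {s : L} {d : F} (hs : s ^ 2 = algebraMap F L d) (hsF : s ∉ (algebraMap F L).range) :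
    minpoly F s = X ^ 2 - C d := by
  have hmonic : (X ^ 2 - C d : F[X]).Monic := by monicity!
  have hroot : aeval s (X ^ 2 - C d : F[X]) = 0 := by simp [hs]
  have hint : IsIntegral F s := ⟨_, hmonic, hroot⟩
  refine (eq_of_monic_of_dvd_of_natDegree_le (minpoly.monic hint) hmonic
    (minpoly.dvd F s hroot) ?_).symm
  have hle := natDegree_le_of_dvd (minpoly.dvd F s hroot) hmonic.ne_zero
  have hne : (minpoly F s).natDegree ≠ 1 := mt minpoly.natDegree_eq_one_iff.mp hsF
  have hpos := minpoly.natDegree_pos hint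
  rw [natDegree_X_pow_sub_C] at hle ⊢
  omega

theorem mem_adjoin_simple_map_iff {F L M : Type*} [Field F] [Field L] [Field M] [Algebra F L]
    [Algebra F M] (f : L →ₐ[F] M) {x y : L} : f y ∈ F⟮f x⟯ ↔ y ∈ F⟮x⟯ := by
  rw [← Set.image_singleton, ← adjoin_map, mem_map]
  exact ⟨fun ⟨z, hz, h⟩ => f.injective h ▸ hz, fun h => ⟨y, h, rfl⟩⟩

theorem not_mem_adjoin_simple_of_algEquiv {F L : Type*} [Field F] [Field L] [Algebra F L]
    (σ : L ≃ₐ[F] L) {x y : L} (hx : σ x = x) (hy : σ y ≠ y) : y ∉ F⟮x⟯ := by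
  intro h
  have hfix : (σ : L →ₐ[F] L).comp F⟮x⟯.val = F⟮x⟯.val :=
    adjoin_algHom_ext F fun z hz => by subst hz; exact hx
  exact hy (AlgHom.congr_fun hfix ⟨y, h⟩)

theorem pow_three_add_inv_eq_neg {K : Type*} [Field K] {η : K} (hη : η ^ 4 = -1) :
    η ^ 3 + (η ^ 3)⁻¹ = -(η + η⁻¹) := by
  have hη0 : η ≠ 0 := by rintro rfl; norm_num at hη
  field_simp
  linear_combination (η ^ 2 + 1) * hη

theorem add_inv_ne_zero_of_pow_four_eq_neg_one {K : Type*} [Field K] [CharZero K] {η : K}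
    (hη : η ^ 4 = -1) : η + η⁻¹ ≠ 0 := by
  have hη0 : η ≠ 0 := by rintro rfl; norm_num at hη
  intro h
  have hsq : η ^ 2 = -1 := by field_simp at h; linear_combination h
  have htwo : (2 : K) = 0 := by linear_combination hη - (η ^ 2 - 1) * hsq
  norm_num at htwo

theorem Nat.coprime_two_mul_sq_add_one_eight_mul (n : ℕ) : (2 * n ^ 2 + 1).Coprime (8 * n) := by
  refine Nat.Coprime.mul_right ?_ ?_
  · rw [show 8 = 2 ^ 3 by rfl, Nat.coprime_pow_right_iff (by norm_num), Nat.coprime_two_right]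
    exact (even_two.mul_right _).add_one
  · rw [show 2 * n ^ 2 + 1 = n * (2 * n) + 1 by ring, Nat.coprime_mul_left_add_left]
    exact Nat.coprime_one_left n

theorem IsPrimitiveRoot.isCyclotomicExtension_adjoin {K L : Type*} [Field K] [Field L]
    [Algebra K L] {n : ℕ} [NeZero n] {ζ : L} (hζ : IsPrimitiveRoot ζ n) :
    IsCyclotomicExtension {n} K K⟮ζ⟯ := by
  change IsCyclotomicExtension {n} K K⟮ζ⟯.toSubalgebra
  have hint : IsIntegral K ζ :=
    ⟨X ^ n - 1, monic_X_pow_sub_C 1 (NeZero.ne n), by simp [hζ.pow_eq_one]⟩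
  rw [adjoin_simple_toSubalgebra_of_isAlgebraic hint.isAlgebraic]
  exact hζ.adjoin_isCyclotomicExtension K

theorem IsCyclotomicExtension.exists_algEquiv_apply_eq_pow {m : ℕ} [NeZero m] (K : Type*)
    [Field K] [CharZero K] [IsCyclotomicExtension {m} ℚ K] {k : ℕ} (hk : k.Coprime m) :
    ∃ σ : K ≃ₐ[ℚ] K, ∀ x : K, x ^ m = 1 → σ x = x ^ k := by
  have := IsCyclotomicExtension.numberField {m} ℚ K
  refine ⟨(Rat.galEquivZMod m K).symm (ZMod.unitOfCoprime k hk), fun x hx => ?_⟩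
  rw [Rat.galEquivZMod_apply_of_pow_eq m K _ hx, MulEquiv.apply_symm_apply,
    ZMod.coe_unitOfCoprime, ZMod.val_natCast]
  conv_rhs => rw [← Nat.mod_add_div k m, pow_add, pow_mul, hx, one_pow, mul_one]

theorem IsCyclotomicExtension.exists_algEquiv_fixes_and_cubes {L : Type*} [Field L]
    [CharZero L] {n : ℕ} (hn : Odd n) [IsCyclotomicExtension {8 * n} ℚ L] {ω η : L}
    (hω : ω ^ n = -1) (hη : η ^ 4 = -1) : ∃ σ : L ≃ₐ[ℚ] L, σ ω = ω ∧ σ η = η ^ 3 := by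
  have : NeZero (8 * n) := ⟨by have := hn.pos; positivity⟩
  -- `2n² + 1` is `1` modulo `2n` and `3` modulo `8`
  obtain ⟨σ, hσ⟩ := exists_algEquiv_apply_eq_pow L (Nat.coprime_two_mul_sq_add_one_eight_mul n)
  have hω1 : ω ^ (8 * n) = 1 := by rw [mul_comm, pow_mul, hω]; norm_num
  have hη1 : η ^ (8 * n) = 1 := by rw [show 8 * n = 4 * (2 * n) by ring, pow_mul, hη]; norm_num
  obtain ⟨j, rfl⟩ := hn
  refine ⟨σ, ?_, ?_⟩
  · calc σ ω = ((ω ^ (2 * j + 1)) ^ 2) ^ (2 * j + 1) * ω := by rw [hσ ω hω1]; ring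
      _ = ω := by rw [hω]; norm_num
  · calc σ η = ((η ^ 4) ^ 2) ^ (j ^ 2 + j) * η ^ 3 := by rw [hσ η hη1]; ring
      _ = η ^ 3 := by rw [hη]; norm_num

theorem Complex.two_cos_ofReal (θ : ℝ) :
    (2 * Real.cos θ : ℂ) = Complex.exp (θ * Complex.I) + (Complex.exp (θ * Complex.I))⁻¹ := by
  rw [← Complex.exp_neg, ← neg_mul, ← Complex.two_cos, Complex.ofReal_cos]

theorem Complex.exp_mul_I_pow (θ : ℝ) (k : ℕ) :
    Complex.exp (θ * Complex.I) ^ k = Complex.exp ((k * θ : ℝ) * Complex.I) := by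
  rw [← Complex.exp_nat_mul]
  push_cast
  ring_nf

theorem Complex.exp_pi_div_mul_I_pow {k : ℕ} (hk : k ≠ 0) :
    Complex.exp ((π / k : ℝ) * Complex.I) ^ k = -1 := by
  rw [Complex.exp_mul_I_pow, mul_div_cancel₀ _ (Nat.cast_ne_zero.mpr hk), Complex.exp_pi_mul_I]

theorem sqrt_two_not_mem_adjoin_cos_pi_div {n : ℕ} (hn : Odd n) :
    √2 ∉ ℚ⟮Real.cos (π / n)⟯ := by
  have hn0 : n ≠ 0 := hn.pos.ne'
  set ζ : ℂ := Complex.exp ((π / (4 * n) : ℝ) * Complex.I)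
  have hζ : IsPrimitiveRoot ζ (8 * n) := by
    convert Complex.isPrimitiveRoot_exp (8 * n) (by positivity) using 2
    push_cast
    field_simp
    ring
  have hζ4 : ζ ^ 4 = Complex.exp ((π / n : ℝ) * Complex.I) := by
    rw [Complex.exp_mul_I_pow]; congr 3; field_simp; push_cast; ring
  have hζn : ζ ^ n = Complex.exp ((π / 4 : ℝ) * Complex.I) := by
    rw [Complex.exp_mul_I_pow]; congr 3; field_simp
  have : NeZero (8 * n) := ⟨by positivity⟩
  have : IsCyclotomicExtension {8 * n} ℚ ℚ⟮ζ⟯ := hζ.isCyclotomicExtension_adjoin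
  let ζ' : ℚ⟮ζ⟯ := ⟨ζ, mem_adjoin_simple_self ℚ ζ⟩
  have hω : (ζ' ^ 4) ^ n = -1 := Subtype.ext <| by
    change (ζ ^ 4) ^ n = -1
    rw [hζ4, Complex.exp_pi_div_mul_I_pow hn0]
  have hη : (ζ' ^ n) ^ 4 = -1 := Subtype.ext <| by
    change (ζ ^ n) ^ 4 = -1
    rw [hζn, ← Nat.cast_ofNat, Complex.exp_pi_div_mul_I_pow four_ne_zero]
  obtain ⟨σ, hσω, hση⟩ := IsCyclotomicExtension.exists_algEquiv_fixes_and_cubes hn hω hη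
  have hc : ((Real.cos (π / n) : ℝ) : ℂ) = ℚ⟮ζ⟯.val ((ζ' ^ 4 + (ζ' ^ 4)⁻¹) / 2) := by
    change _ = (ζ ^ 4 + (ζ ^ 4)⁻¹) / 2
    rw [hζ4, ← Complex.two_cos_ofReal]
    ring
  have hs : ((√2 : ℝ) : ℂ) = ℚ⟮ζ⟯.val (ζ' ^ n + (ζ' ^ n)⁻¹) := by
    change _ = ζ ^ n + (ζ ^ n)⁻¹
    rw [hζn, ← Complex.two_cos_ofReal, Real.cos_pi_div_four]
    push_cast
    ring
  intro h
  refine not_mem_adjoin_simple_of_algEquiv σ (x := (ζ' ^ 4 + (ζ' ^ 4)⁻¹) / 2)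
    (y := ζ' ^ n + (ζ' ^ n)⁻¹) (by simp [hσω, map_ofNat]) ?_
    ((mem_adjoin_simple_map_iff ℚ⟮ζ⟯.val).mp ?_)
  · rw [map_add, map_inv₀, hση, pow_three_add_inv_eq_neg hη]
    exact neg_ne_self.mpr (add_inv_ne_zero_of_pow_four_eq_neg_one hη)
  · rw [← hc, ← hs]
    exact (mem_adjoin_simple_map_iff (Complex.ofRealAm.restrictScalars ℚ)).mpr h

theorem minpoly_two_cos_pi_n_plus_sqrt_two_general
    (n : ℕ) (hodd : Odd n)
    (c : ℝ) (hc : c = Real.cos (π / n)) :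
    (minpoly (IntermediateField.adjoin ℚ ({c} : Set ℝ)) (2 * c + Real.sqrt 2)).map
        (algebraMap (IntermediateField.adjoin ℚ ({c} : Set ℝ)) ℝ)
      = X ^ 2 - C (4 * c) * X + C (4 * c ^ 2 - 2) := by
  have hsqrt : √2 ∉ (algebraMap ℚ⟮c⟯ ℝ).range := by
    rintro ⟨x, hx⟩
    exact sqrt_two_not_mem_adjoin_cos_pi_div hodd (hc ▸ hx ▸ x.2)
  have hsq : √2 ^ 2 = algebraMap ℚ⟮c⟯ ℝ 2 := (sq_sqrt zero_le_two).trans (map_ofNat _ 2).symm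
  let a : ℚ⟮c⟯ := ⟨2 * c, mul_mem (ofNat_mem _ 2) (mem_adjoin_simple_self ℚ c)⟩
  rw [add_comm, show 2 * c = algebraMap ℚ⟮c⟯ ℝ a from rfl, minpoly.add_algebraMap,
    minpoly_eq_X_sq_sub_C_of_sq_eq hsq hsqrt]
  simp only [Polynomial.map_comp, Polynomial.map_sub, Polynomial.map_pow, map_X, map_C]
  change (X ^ 2 - 2 : ℝ[X]).comp (X - C (2 * c)) = _
  simp only [sub_comp, pow_comp, X_comp, ofNat_comp, C_mul, C_sub, C_pow, C_ofNat]
  ring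

/-- Let `n ≥ 3` be odd and `c = cos(π/n)`.  The minimal polynomial of `2c + √2` over the
subfield `ℚ(c) ⊆ ℝ` is `X² − 4c·X + (4c² − 2)` (stated via its image under the injective
map `Polynomial ℚ(c) → Polynomial ℝ`). -/
theorem minpoly_two_cos_pi_n_plus_sqrt_two
    (n : ℕ) (hn : 3 ≤ n) (hodd : Odd n)
    (c : ℝ) (hc : c = Real.cos (π / n)) :
    (minpoly (IntermediateField.adjoin ℚ ({c} : Set ℝ)) (2 * c + Real.sqrt 2)).map
        (algebraMap (IntermediateField.adjoin ℚ ({c} : Set ℝ)) ℝ)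
      = X ^ 2 - C (4 * c) * X + C (4 * c ^ 2 - 2) :=
  minpoly_two_cos_pi_n_plus_sqrt_two_general n hodd c hc

end
end

section
/- Let n ≥ 2 be an integer. Then ∫₂^∞ (u−2)^{1/(2n)−1}·(u−2cos(2π/5))^{1/n−1}·(u−2cos(4π/5))^{1/n−1} du = ∫₁^∞ z^{1−5/(2n)}·(z⁵−1)^{1/n−1}·(z+1) dz, and both integrals are finite. (The substitution u = z + 1/z transforms one integral into the other.) -/
/-!
Under the Joukowski map `u = z + z⁻¹`, an increasing bijection of `(1, ∞)` onto `(2, ∞)`, a factor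
`u - 2c` becomes `(z² - 2cz + 1) / z`, and `u - 2 = (z - 1)² / z`. For `c = cos (2π/5), cos (4π/5)`
the two quadratics multiply to `(z⁵ - 1) / (z - 1)`, so with the exponents `(b - 1)/2, b, b` the
pulled-back integrand is `(z⁵ - 1)^b / (z - 1)` times a power of `z`; the Jacobian
`1 - z⁻² = (z - 1)(z + 1) / z²` cancels the `z - 1`. The resulting integrand behaves like `(z - 1)^b`
at `1` and like `z^((5b - 1)/2)` at `∞`, so it is integrable for `-1 < b < -1/5`, which covers
`b = 1/n - 1` for `n ≥ 2`.
-/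

open Real MeasureTheory Set

theorem cos_two_pi_div_five : cos (2 * π / 5) = (√5 - 1) / 4 := by
  have h5 : √5 ^ 2 = 5 := sq_sqrt (by norm_num)
  rw [show 2 * π / 5 = 2 * (π / 5) by ring, cos_two_mul, cos_pi_div_five]
  linear_combination h5 / 8

theorem cos_four_pi_div_five : cos (4 * π / 5) = -(1 + √5) / 4 := by
  rw [show 4 * π / 5 = π - π / 5 by ring, cos_pi_sub, cos_pi_div_five]
  ring

theorem pow_five_sub_one_eq_mul_cos (z : ℝ) :
    z ^ 5 - 1 = (z - 1) * (z ^ 2 - 2 * cos (2 * π / 5) * z + 1)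
      * (z ^ 2 - 2 * cos (4 * π / 5) * z + 1) := by
  have h5 : √5 ^ 2 = 5 := sq_sqrt (by norm_num)
  rw [cos_two_pi_div_five, cos_four_pi_div_five]
  linear_combination (z - 1) * z ^ 2 / 4 * h5

section Joukowski

variable {z : ℝ}

theorem add_inv_sub_two_eq (hz : z ≠ 0) : z + z⁻¹ - 2 = (z - 1) ^ 2 / z := by
  field_simp
  ring

theorem add_inv_sub_two_mul_eq (hz : z ≠ 0) (c : ℝ) :
    z + z⁻¹ - 2 * c = (z ^ 2 - 2 * c * z + 1) / z := by
  field_simp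
  ring

theorem hasDerivAt_add_inv (hz : z ≠ 0) : HasDerivAt (fun x : ℝ => x + x⁻¹) (1 - (z ^ 2)⁻¹) z :=
  ((hasDerivAt_id' z).add (hasDerivAt_inv hz)).congr_deriv (by ring)

theorem abs_one_sub_inv_sq (hz : 1 < z) : |1 - (z ^ 2)⁻¹| = (z - 1) * (z + 1) / z ^ 2 := by
  have hz0 : z ≠ 0 := by positivity
  rw [abs_of_pos (sub_pos.2 (inv_lt_one_of_one_lt₀ (one_lt_pow₀ hz two_ne_zero)))]
  field_simp
  ring

theorem strictMonoOn_add_inv : StrictMonoOn (fun x : ℝ => x + x⁻¹) (Ici 1) := by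
  intro x (hx : 1 ≤ x) y (hy : 1 ≤ y) hxy
  have hxy₀ : 0 < x * y := by positivity
  have hdiff : y + y⁻¹ - (x + x⁻¹) = (y - x) * (x * y - 1) / (x * y) := by
    field_simp
    ring
  have : 0 < (y - x) * (x * y - 1) / (x * y) := by
    apply div_pos (mul_pos (sub_pos.2 hxy) _) hxy₀
    nlinarith
  linarith

theorem image_add_inv_Ioi_one : (fun x : ℝ => x + x⁻¹) '' Ioi 1 = Ioi 2 := by
  ext u
  constructor
  · rintro ⟨x, hx : 1 < x, rfl⟩
    rw [mem_Ioi, ← sub_pos, add_inv_sub_two_eq (by positivity)]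
    have : 0 < x - 1 := sub_pos.2 hx
    positivity
  · intro (hu : 2 < u)
    -- the larger root of `x² - u x + 1`
    have hs : √(u ^ 2 - 4) ^ 2 = u ^ 2 - 4 := sq_sqrt (by nlinarith)
    have hs₀ : 0 < √(u ^ 2 - 4) := sqrt_pos.2 (by nlinarith)
    refine ⟨(u + √(u ^ 2 - 4)) / 2, by rw [mem_Ioi]; linarith, ?_⟩
    have : u + √(u ^ 2 - 4) ≠ 0 := by linarith
    field_simp
    nlinarith

theorem abs_deriv_mul_rpow_add_inv_sub {b c₂ c₄ : ℝ} (hz : 1 < z) (hc₂ : c₂ ≤ 1) (hc₄ : c₄ ≤ 1) :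
    |1 - (z ^ 2)⁻¹| * ((z + z⁻¹ - 2) ^ ((b - 1) / 2) * (z + z⁻¹ - 2 * c₂) ^ b
        * (z + z⁻¹ - 2 * c₄) ^ b)
      = z ^ (-(5 * b + 3) / 2)
        * ((z - 1) * (z ^ 2 - 2 * c₂ * z + 1) * (z ^ 2 - 2 * c₄ * z + 1)) ^ b * (z + 1) := by
  have hz₀ : 0 < z := by linarith
  have hz₁ : 0 < z - 1 := by linarith
  have hQ₂ : 0 < z ^ 2 - 2 * c₂ * z + 1 := by nlinarith
  have hQ₄ : 0 < z ^ 2 - 2 * c₄ * z + 1 := by nlinarith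
  have hsq : ((z - 1) ^ 2) ^ ((b - 1) / 2) = (z - 1) ^ b / (z - 1) := by
    rw [← rpow_natCast, ← rpow_mul hz₁.le, ← rpow_sub_one hz₁.ne']
    congr 1
    push_cast
    ring
  have hpow : z ^ (-(5 * b + 3) / 2) = (z ^ ((b - 1) / 2) * z ^ b * z ^ b * z ^ 2)⁻¹ := by
    rw [← rpow_natCast, ← rpow_add hz₀, ← rpow_add hz₀, ← rpow_add hz₀, ← rpow_neg hz₀.le]
    congr 1
    push_cast
    ring
  rw [add_inv_sub_two_eq hz₀.ne', add_inv_sub_two_mul_eq hz₀.ne', add_inv_sub_two_mul_eq hz₀.ne',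
    div_rpow (by positivity) hz₀.le, div_rpow hQ₂.le hz₀.le, div_rpow hQ₄.le hz₀.le, hsq,
    mul_rpow (by positivity) hQ₄.le, mul_rpow hz₁.le hQ₂.le, abs_one_sub_inv_sq hz, hpow]
  field_simp

end Joukowski

section Integrability

variable {p b : ℝ}

theorem integrableOn_rpow_mul_pow_five_sub_one_rpow_Ioc_one_two (hb₁ : -1 < b) (hb₀ : b ≤ 0) :
    IntegrableOn (fun z : ℝ => z ^ p * (z ^ 5 - 1) ^ b * (z + 1)) (Ioc 1 2) := by
  have hdom : IntegrableOn (fun z : ℝ => 2 ^ |p| * 3 * (z - 1) ^ b) (Ioc 1 2) := by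
    have := (intervalIntegral.intervalIntegrable_rpow' (a := 0) (b := 1) hb₁).comp_sub_right 1
    norm_num at this
    exact ((intervalIntegrable_iff_integrableOn_Ioc_of_le one_le_two).1 this).const_mul _
  refine hdom.mono' (by fun_prop : Measurable _).aestronglyMeasurable
    ((ae_restrict_iff' measurableSet_Ioc).2 (ae_of_all _ fun z ⟨hz₁, hz₂⟩ => ?_))
  have hz : 0 < z - 1 := sub_pos.2 hz₁
  have h5 : z - 1 ≤ z ^ 5 - 1 := by
    linarith [le_self_pow₀ hz₁.le (by norm_num : 5 ≠ 0)]
  have hzp : z ^ p ≤ 2 ^ |p| := (rpow_le_rpow_of_exponent_le hz₁.le (le_abs_self p)).trans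
    (rpow_le_rpow (by positivity) hz₂ (abs_nonneg p))
  have hpos : 0 ≤ (z ^ 5 - 1) ^ b := rpow_nonneg (hz.trans_le h5).le b
  rw [Real.norm_of_nonneg (by positivity)]
  calc z ^ p * (z ^ 5 - 1) ^ b * (z + 1) ≤ 2 ^ |p| * (z - 1) ^ b * 3 :=
        mul_le_mul (mul_le_mul hzp (rpow_le_rpow_of_nonpos hz h5 hb₀) hpos
          (by positivity)) (by linarith) (by positivity) (by positivity)
    _ = 2 ^ |p| * 3 * (z - 1) ^ b := by ring

theorem integrableOn_rpow_mul_pow_five_sub_one_rpow_Ioi_two (hb₀ : b ≤ 0)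
    (hpb : p + 5 * b + 1 < -1) :
    IntegrableOn (fun z : ℝ => z ^ p * (z ^ 5 - 1) ^ b * (z + 1)) (Ioi 2) := by
  have hdom : IntegrableOn (fun z : ℝ => 2 ^ (1 - b) * z ^ (p + 5 * b + 1)) (Ioi 2) :=
    (integrableOn_Ioi_rpow_of_lt hpb two_pos).const_mul _
  refine hdom.mono' (by fun_prop : Measurable _).aestronglyMeasurable
    ((ae_restrict_iff' measurableSet_Ioi).2 (ae_of_all _ fun z (hz : 2 < z) => ?_))
  have hz₀ : 0 < z := by linarith
  have h5 : z ^ 5 / 2 ≤ z ^ 5 - 1 := by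
    nlinarith [pow_lt_pow_left₀ hz (by norm_num) (by norm_num : 5 ≠ 0)]
  have hpos : 0 ≤ (z ^ 5 - 1) ^ b := rpow_nonneg ((by positivity : (0 : ℝ) ≤ z ^ 5 / 2).trans h5) b
  rw [Real.norm_of_nonneg (by positivity)]
  calc z ^ p * (z ^ 5 - 1) ^ b * (z + 1) ≤ z ^ p * (z ^ 5 / 2) ^ b * (2 * z) :=
        mul_le_mul (mul_le_mul_of_nonneg_left (rpow_le_rpow_of_nonpos (by positivity) h5 hb₀)
          (by positivity)) (by linarith) (by positivity) (by positivity)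
    _ = 2 ^ (1 - b) * z ^ (p + 5 * b + 1) := by
        rw [div_rpow (by positivity) zero_le_two, ← rpow_natCast z 5, ← rpow_mul hz₀.le,
          rpow_add hz₀, rpow_add hz₀, rpow_one, rpow_sub two_pos, rpow_one]
        push_cast
        field_simp

theorem integrableOn_rpow_mul_pow_five_sub_one_rpow_Ioi_one (hb₁ : -1 < b) (hb₀ : b ≤ 0)
    (hpb : p + 5 * b + 1 < -1) :
    IntegrableOn (fun z : ℝ => z ^ p * (z ^ 5 - 1) ^ b * (z + 1)) (Ioi 1) := by
  rw [← Ioc_union_Ioi_eq_Ioi one_le_two]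
  exact (integrableOn_rpow_mul_pow_five_sub_one_rpow_Ioc_one_two hb₁ hb₀).union
    (integrableOn_rpow_mul_pow_five_sub_one_rpow_Ioi_two hb₀ hpb)

end Integrability

theorem integrableOn_image_and_setIntegral_image_eq {s : Set ℝ} {φ φ' f g : ℝ → ℝ}
    (hs : MeasurableSet s) (hφ' : ∀ x ∈ s, HasDerivWithinAt φ (φ' x) s x) (hφ : InjOn φ s)
    (hfg : ∀ x ∈ s, |φ' x| * f (φ x) = g x) (hg : IntegrableOn g s) :
    IntegrableOn f (φ '' s) ∧ ∫ u in φ '' s, f u = ∫ x in s, g x := by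
  refine ⟨(integrableOn_image_iff_integrableOn_abs_deriv_smul hs hφ' hφ f).2
    (hg.congr_fun (fun x hx => (hfg x hx).symm) hs), ?_⟩
  rw [integral_image_eq_integral_abs_deriv_smul hs hφ' hφ f]
  exact setIntegral_congr_fun hs hfg

theorem integrableOn_and_setIntegral_eq_of_joukowski {b : ℝ} (hb₁ : -1 < b) (hb : b < -1 / 5) :
    IntegrableOn (fun u : ℝ => (u - 2) ^ ((b - 1) / 2) * (u - 2 * cos (2 * π / 5)) ^ b
        * (u - 2 * cos (4 * π / 5)) ^ b) (Ioi 2) ∧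
    IntegrableOn (fun z : ℝ => z ^ (-(5 * b + 3) / 2) * (z ^ 5 - 1) ^ b * (z + 1)) (Ioi 1) ∧
    (∫ u in Ioi (2 : ℝ), (u - 2) ^ ((b - 1) / 2) * (u - 2 * cos (2 * π / 5)) ^ b
        * (u - 2 * cos (4 * π / 5)) ^ b)
      = ∫ z in Ioi (1 : ℝ), z ^ (-(5 * b + 3) / 2) * (z ^ 5 - 1) ^ b * (z + 1) := by
  have hg := integrableOn_rpow_mul_pow_five_sub_one_rpow_Ioi_one (p := -(5 * b + 3) / 2) hb₁
    (by linarith) (by linarith)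
  rw [← image_add_inv_Ioi_one]
  refine and_left_comm.1 ⟨hg, integrableOn_image_and_setIntegral_image_eq measurableSet_Ioi
    (fun x (hx : 1 < x) => (hasDerivAt_add_inv (by positivity)).hasDerivWithinAt)
    (strictMonoOn_add_inv.injOn.mono Ioi_subset_Ici_self) (fun x (hx : 1 < x) => ?_) hg⟩
  rw [abs_deriv_mul_rpow_add_inv_sub hx (cos_le_one _) (cos_le_one _),
    ← pow_five_sub_one_eq_mul_cos]

/-- The substitution `u = z + 1/z` transforms the Schwarz–Christoffel side-length integral
`∫₂^∞ (u−2)^{1/2n−1}(u−2cos(2π/5))^{1/n−1}(u−2cos(4π/5))^{1/n−1} du` into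
`∫₁^∞ z^{1−5/2n}(z⁵−1)^{1/n−1}(z+1) dz`; both improper integrals are finite and equal. -/
theorem schwarz_christoffel_integral_substitution
    (n : ℕ) (hn : 2 ≤ n) :
    IntegrableOn (fun u : ℝ =>
        (u - 2) ^ ((1 : ℝ) / (2 * n) - 1) * (u - 2 * Real.cos (2 * π / 5)) ^ ((1 : ℝ) / n - 1)
          * (u - 2 * Real.cos (4 * π / 5)) ^ ((1 : ℝ) / n - 1)) (Set.Ioi 2) ∧
    IntegrableOn (fun z : ℝ =>
        z ^ (1 - 5 / (2 * (n : ℝ))) * (z ^ 5 - 1) ^ ((1 : ℝ) / n - 1) * (z + 1))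
      (Set.Ioi 1) ∧
    (∫ u in Set.Ioi (2 : ℝ),
        (u - 2) ^ ((1 : ℝ) / (2 * n) - 1) * (u - 2 * Real.cos (2 * π / 5)) ^ ((1 : ℝ) / n - 1)
          * (u - 2 * Real.cos (4 * π / 5)) ^ ((1 : ℝ) / n - 1))
      = ∫ z in Set.Ioi (1 : ℝ),
          z ^ (1 - 5 / (2 * (n : ℝ))) * (z ^ 5 - 1) ^ ((1 : ℝ) / n - 1) * (z + 1) := by
  have hn' : (2 : ℝ) ≤ n := by exact_mod_cast hn
  have ha : (1 : ℝ) / (2 * n) - 1 = (1 / n - 1 - 1) / 2 := by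
    field_simp
    ring
  have hp : 1 - 5 / (2 * (n : ℝ)) = -(5 * (1 / n - 1) + 3) / 2 := by
    field_simp
    ring
  have hn₀ : (0 : ℝ) < 1 / n := by positivity
  have hn₂ : (1 : ℝ) / n ≤ 1 / 2 := one_div_le_one_div_of_le two_pos hn'
  rw [ha, hp]
  exact integrableOn_and_setIntegral_eq_of_joukowski (by linarith) (by linarith)
end

section
/- Let n ≥ 2 be an integer. Then ∫₁^∞ z^{1−5/(2n)}·(z⁵−1)^{1/n−1}·(z+1) dz = (1/5)·( B(2/5 − 1/(2n), 1/n) + B(3/5 − 1/(2n), 1/n) ), where B(a,b) = Γ(a)Γ(b)/Γ(a+b) denotes the Euler Beta function. -/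
/-!
The substitution `x = z⁻ᵖ` maps `(1, ∞)` onto `(0, 1)` and turns the Beta integral
`∫₀¹ x^(a-1) (1-x)^(b-1) dx` into `p ∫₁^∞ z^(p-1-p(a+b)) (zᵖ-1)^(b-1) dz`. Writing the factor
`z + 1` as `z¹ + z⁰` splits the integrand into two such terms with `p = 5`, `b = 1/n` and
`a = 2/5 - 1/(2n)`, resp. `a = 3/5 - 1/(2n)`.
-/

open Real MeasureTheory

noncomputable section

/-- The Euler Beta function `B(a,b) = Γ(a)Γ(b)/Γ(a+b)`. -/
def eulerBeta (a b : ℝ) : ℝ := Real.Gamma a * Real.Gamma b / Real.Gamma (a + b)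

open Set

lemma ofReal_betaIntegrand {a b x : ℝ} (hx : x ∈ Ioo 0 1) :
    ((x ^ (a - 1) * (1 - x) ^ (b - 1) : ℝ) : ℂ) =
      (x : ℂ) ^ ((a : ℂ) - 1) * (1 - (x : ℂ)) ^ ((b : ℂ) - 1) := by
  push_cast [Complex.ofReal_cpow hx.1.le, Complex.ofReal_cpow (sub_nonneg.2 hx.2.le)]
  rfl

lemma integrableOn_betaIntegrand {a b : ℝ} (ha : 0 < a) (hb : 0 < b) :
    IntegrableOn (fun x : ℝ => x ^ (a - 1) * (1 - x) ^ (b - 1)) (Ioo 0 1) := by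
  have h := ((Complex.betaIntegral_convergent (u := a) (v := b) (by simpa)
    (by simpa)).1.mono_set Ioo_subset_Ioc_self).re
  refine IntegrableOn.congr_fun h (fun x hx => ?_) measurableSet_Ioo
  simp only [← ofReal_betaIntegrand hx, RCLike.re_to_complex, Complex.ofReal_re]

lemma eulerBeta_eq_integral {a b : ℝ} (ha : 0 < a) (hb : 0 < b) :
    eulerBeta a b = ∫ x in Ioo 0 1, x ^ (a - 1) * (1 - x) ^ (b - 1) := by
  have hc := (Complex.betaIntegral_convergent (u := a) (v := b) (by simpa) (by simpa)).1
  calc eulerBeta a b = (Complex.betaIntegral a b).re :=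
        ProbabilityTheory.beta_eq_betaIntegralReal a b ha hb
    _ = ∫ x : ℝ in Ioo 0 1,
          ((x : ℂ) ^ ((a : ℂ) - 1) * (1 - (x : ℂ)) ^ ((b : ℂ) - 1)).re := by
      rw [Complex.betaIntegral, intervalIntegral.integral_of_le zero_le_one,
        integral_Ioc_eq_integral_Ioo, ← RCLike.re_to_complex, ← integral_re]
      · rfl
      · exact hc.mono_set Ioo_subset_Ioc_self
    _ = _ := setIntegral_congr_fun measurableSet_Ioo fun x hx => by
      simp only [← ofReal_betaIntegrand hx, Complex.ofReal_re]

lemma image_rpow_neg_Ioi_one {p : ℝ} (hp : 0 < p) :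
    (fun z : ℝ => z ^ (-p)) '' Ioi 1 = Ioo 0 1 := by
  ext t
  constructor
  · rintro ⟨z, hz, rfl⟩
    exact ⟨rpow_pos_of_pos (zero_lt_one.trans hz) _,
      rpow_lt_one_of_one_lt_of_neg hz (neg_neg_of_pos hp)⟩
  · intro ht
    refine ⟨t ^ (-p⁻¹), (one_lt_rpow_iff_of_pos ht.1).2 (Or.inr ⟨ht.2, by simpa⟩), ?_⟩
    simp only [← rpow_mul ht.1.le, neg_mul_neg, inv_mul_cancel₀ hp.ne', rpow_one]

lemma injOn_rpow_neg_Ioi_one {p : ℝ} (hp : 0 < p) : InjOn (fun z : ℝ => z ^ (-p)) (Ioi 1) :=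
  (strictAntiOn_rpow_Ioi_of_exponent_neg (neg_neg_of_pos hp)).injOn.mono
    (Ioi_subset_Ioi zero_le_one)

lemma hasDerivWithinAt_rpow_neg_Ioi_one (p : ℝ) {z : ℝ} (hz : z ∈ Ioi 1) :
    HasDerivWithinAt (fun z : ℝ => z ^ (-p)) (-p * z ^ (-p - 1)) (Ioi 1) z :=
  (hasDerivAt_rpow_const (Or.inl (zero_lt_one.trans hz).ne')).hasDerivWithinAt

lemma abs_mul_betaIntegrand_rpow_neg {p : ℝ} (hp : 0 < p) (a b : ℝ) {z : ℝ}
    (hz : z ∈ Ioi 1) :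
    |-p * z ^ (-p - 1)| • ((z ^ (-p)) ^ (a - 1) * (1 - z ^ (-p)) ^ (b - 1)) =
      p * (z ^ (p - 1 - p * (a + b)) * (z ^ p - 1) ^ (b - 1)) := by
  have hz₀ : 0 < z := zero_lt_one.trans hz
  have hsub : 1 - z ^ (-p) = (z ^ p - 1) * z ^ (-p) := by
    rw [sub_mul, ← rpow_add hz₀, add_neg_cancel, rpow_zero, one_mul]
  have hexp : z ^ (p - 1 - p * (a + b)) =
      z ^ (-p - 1) * z ^ (-p * (a - 1)) * z ^ (-p * (b - 1)) := by
    rw [← rpow_add hz₀, ← rpow_add hz₀]; ring_nf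
  rw [smul_eq_mul, abs_mul, abs_neg, abs_of_pos hp, abs_of_pos (rpow_pos_of_pos hz₀ _), hsub,
    mul_rpow (sub_nonneg.2 (one_le_rpow (le_of_lt hz) hp.le)) (rpow_nonneg hz₀.le _),
    ← rpow_mul hz₀.le, ← rpow_mul hz₀.le, hexp]
  ring

lemma integral_betaIntegrand_eq_integral_Ioi {p : ℝ} (hp : 0 < p) (a b : ℝ) :
    ∫ x in Ioo 0 1, x ^ (a - 1) * (1 - x) ^ (b - 1) =
      p * ∫ z in Ioi 1, z ^ (p - 1 - p * (a + b)) * (z ^ p - 1) ^ (b - 1) := by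
  rw [← image_rpow_neg_Ioi_one hp, integral_image_eq_integral_abs_deriv_smul measurableSet_Ioi
    (fun z hz => hasDerivWithinAt_rpow_neg_Ioi_one p hz) (injOn_rpow_neg_Ioi_one hp),
    ← integral_const_mul]
  exact setIntegral_congr_fun measurableSet_Ioi fun z hz =>
    abs_mul_betaIntegrand_rpow_neg hp a b hz

lemma integrableOn_Ioi_rpow_mul_rpow_sub_one {p a b : ℝ} (hp : 0 < p) (ha : 0 < a)
    (hb : 0 < b) :
    IntegrableOn (fun z : ℝ => z ^ (p - 1 - p * (a + b)) * (z ^ p - 1) ^ (b - 1)) (Ioi 1) := by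
  have h := (integrableOn_image_iff_integrableOn_abs_deriv_smul measurableSet_Ioi
    (fun z hz => hasDerivWithinAt_rpow_neg_Ioi_one p hz) (injOn_rpow_neg_Ioi_one hp) _).1
    (image_rpow_neg_Ioi_one hp ▸ integrableOn_betaIntegrand ha hb)
  refine (integrable_const_mul_iff (isUnit_iff_ne_zero.2 hp.ne') _).1 ?_
  exact h.congr_fun (fun z hz => abs_mul_betaIntegrand_rpow_neg hp a b hz) measurableSet_Ioi

theorem integral_Ioi_rpow_mul_rpow_sub_one {p a b : ℝ} (hp : 0 < p) (ha : 0 < a)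
    (hb : 0 < b) :
    ∫ z in Ioi 1, z ^ (p - 1 - p * (a + b)) * (z ^ p - 1) ^ (b - 1) = eulerBeta a b / p := by
  rw [eulerBeta_eq_integral ha hb, integral_betaIntegrand_eq_integral_Ioi hp,
    mul_div_cancel_left₀ _ hp.ne']

/-- For `n ≥ 2`, the side-length integral `∫₁^∞ z^{1−5/2n}(z⁵−1)^{1/n−1}(z+1) dz` equals
`(1/5)·(B(2/5 − 1/2n, 1/n) + B(3/5 − 1/2n, 1/n))`. -/
theorem schwarz_christoffel_integral_as_beta_values
    (n : ℕ) (hn : 2 ≤ n) :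
    (∫ z in Set.Ioi (1 : ℝ),
        z ^ (1 - 5 / (2 * (n : ℝ))) * (z ^ 5 - 1) ^ ((1 : ℝ) / n - 1) * (z + 1))
      = (1 / 5) * (eulerBeta (2 / 5 - 1 / (2 * n)) (1 / n)
          + eulerBeta (3 / 5 - 1 / (2 * n)) (1 / n)) := by
  have hn' : (2 : ℝ) ≤ n := by exact_mod_cast hn
  have hb : (0 : ℝ) < 1 / n := by positivity
  have ha₂ : (0 : ℝ) < 2 / 5 - 1 / (2 * n) := by
    have : 1 / (2 * (n : ℝ)) ≤ 1 / 4 := by gcongr; linarith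
    linarith
  have ha₃ : (0 : ℝ) < 3 / 5 - 1 / (2 * n) := by linarith
  set b : ℝ := 1 / n
  set a₂ : ℝ := 2 / 5 - 1 / (2 * n)
  set a₃ : ℝ := 3 / 5 - 1 / (2 * n)
  have hc₂ : 1 - 5 / (2 * (n : ℝ)) + 1 = 5 - 1 - 5 * (a₂ + b) := by
    simp only [a₂, b]; field_simp; ring
  have hc₃ : 1 - 5 / (2 * (n : ℝ)) = 5 - 1 - 5 * (a₃ + b) := by
    simp only [a₃, b]; field_simp; ring
  have hsplit : ∀ z ∈ Ioi (1 : ℝ),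
      z ^ (1 - 5 / (2 * (n : ℝ))) * (z ^ 5 - 1) ^ (b - 1) * (z + 1) =
        z ^ (5 - 1 - 5 * (a₂ + b)) * (z ^ (5 : ℝ) - 1) ^ (b - 1) +
          z ^ (5 - 1 - 5 * (a₃ + b)) * (z ^ (5 : ℝ) - 1) ^ (b - 1) := by
    intro z hz
    rw [rpow_ofNat, ← hc₂, ← hc₃, rpow_add_one (zero_lt_one.trans hz).ne']
    ring
  rw [setIntegral_congr_fun measurableSet_Ioi hsplit,
    integral_add (integrableOn_Ioi_rpow_mul_rpow_sub_one (by norm_num) ha₂ hb)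
      (integrableOn_Ioi_rpow_mul_rpow_sub_one (by norm_num) ha₃ hb),
    integral_Ioi_rpow_mul_rpow_sub_one (by norm_num) ha₂ hb,
    integral_Ioi_rpow_mul_rpow_sub_one (by norm_num) ha₃ hb]
  ring

end
end

section
/- Let n ≥ 7 be an odd integer not divisible by 5. Set B₁ = B(2/5 − 1/(2n), 1/n) and B₂ = B(3/5 − 1/(2n), 1/n), where B(a,b) = Γ(a)Γ(b)/Γ(a+b) is the Euler Beta function. Then, in ℂ, | (−1 + e^{i(4π/5 − π/n)})·B₁ + (−1 + e^{i(6π/5 − π/n)})·B₂ | = ( (cos(π/n) + cos(π/5)) / cos(π/(2n)) )·( B₁ + B₂ ). -/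
/-!
Put `p = π/2 - π/(2n)` and `q = π/10`. The Beta arguments are `a = (p - q)/π` and
`c = (p + q)/π`, and `a + 1/n + c = 1`, so the reflection formula gives
`s := sin (p - q) B₁ = sin (p + q) B₂`. Since `e^{2iθ} - 1 = 2i sin θ e^{iθ}`, the complex sum
collapses to `4i s cos q e^{ip}`, of modulus `4 s cos q`. On the other side
`cos (π/n) + cos (π/5) = cos 2q - cos 2p = 2 sin (p - q) sin (p + q)` and
`sin (p - q) + sin (p + q) = 2 sin p cos q` with `sin p = cos (π/(2n))`, so the right-hand side
is `4 s cos q` as well.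
-/

open Real

noncomputable section

theorem eulerBeta_pos {a b : ℝ} (ha : 0 < a) (hb : 0 < b) : 0 < eulerBeta a b := by
  unfold eulerBeta
  have := Gamma_pos_of_pos ha; have := Gamma_pos_of_pos hb
  have := Gamma_pos_of_pos (add_pos ha hb)
  positivity

theorem sin_pi_mul_mul_Gamma_mul_Gamma_one_sub {s : ℝ} (hs₀ : 0 < s) (hs₁ : s < 1) :
    sin (π * s) * (Gamma s * Gamma (1 - s)) = π := by
  have : sin (π * s) ≠ 0 := (sin_pos_of_pos_of_lt_pi (by positivity) (by nlinarith [pi_pos])).ne'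
  rw [Gamma_mul_Gamma_one_sub]; field_simp

theorem sin_pi_mul_mul_eulerBeta_eq {a b c : ℝ} (ha : 0 < a) (hb : 0 < b) (hc : 0 < c)
    (habc : a + b + c = 1) :
    sin (π * a) * eulerBeta a b = sin (π * c) * eulerBeta c b := by
  -- both sides equal `π Γ(b) / (Γ(1 - a) Γ(1 - c))`
  have hac : a + b = 1 - c := by linarith
  have hca : c + b = 1 - a := by linarith
  have h₁ := sin_pi_mul_mul_Gamma_mul_Gamma_one_sub ha (by linarith)
  have h₂ := sin_pi_mul_mul_Gamma_mul_Gamma_one_sub hc (by linarith)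
  have := (Gamma_pos_of_pos (show 0 < 1 - a by linarith)).ne'
  have := (Gamma_pos_of_pos (show 0 < 1 - c by linarith)).ne'
  unfold eulerBeta
  rw [hac, hca]
  field_simp
  linear_combination h₁ - h₂

open Complex in
theorem Complex.exp_I_mul_two_mul_sub_one (z : ℂ) :
    exp (I * (2 * z)) - 1 = 2 * I * sin z * exp (I * z) := by
  have hexp : exp (-z * I) * exp (z * I) = 1 := by rw [← exp_add]; simp
  rw [show 2 * I * sin z = I * (2 * sin z) by ring, two_sin,
    show I * (2 * z) = z * I + z * I by ring, exp_add, mul_comm I z]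
  linear_combination hexp + (exp (z * I) ^ 2 - exp (z * I) * exp (-z * I)) * I_sq

theorem side_sum_eq {p q B₁ B₂ : ℝ} (h : sin (p - q) * B₁ = sin (p + q) * B₂) :
    (-1 + Complex.exp (Complex.I * ((2 * (p - q) : ℝ) : ℂ))) * (B₁ : ℂ)
        + (-1 + Complex.exp (Complex.I * ((2 * (p + q) : ℝ) : ℂ))) * (B₂ : ℂ)
      = 4 * Complex.I * ((cos q * (sin (p - q) * B₁) : ℝ) : ℂ) * Complex.exp (Complex.I * p) := by
  have hC : Complex.sin (p - q) * B₁ = Complex.sin (p + q) * B₂ := by exact_mod_cast h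
  push_cast
  calc _ = 2 * Complex.I * (Complex.sin (p - q) * B₁) * Complex.exp (Complex.I * (p - q))
          + 2 * Complex.I * (Complex.sin (p + q) * B₂) * Complex.exp (Complex.I * (p + q)) := by
        rw [neg_add_eq_sub, neg_add_eq_sub, Complex.exp_I_mul_two_mul_sub_one,
          Complex.exp_I_mul_two_mul_sub_one]
        ring
    _ = 2 * Complex.I * (Complex.sin (p - q) * B₁) * Complex.exp (Complex.I * p)
          * (Complex.exp (q * Complex.I) + Complex.exp (-q * Complex.I)) := by
        rw [← hC, show Complex.I * (p - q) = Complex.I * p + -q * Complex.I by ring,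
          show Complex.I * (p + q) = Complex.I * p + q * Complex.I by ring, Complex.exp_add,
          Complex.exp_add]
        ring
    _ = _ := by rw [← Complex.two_cos]; ring

theorem norm_side_sum {p q B₁ B₂ : ℝ} (h : sin (p - q) * B₁ = sin (p + q) * B₂) :
    ‖(-1 + Complex.exp (Complex.I * ((2 * (p - q) : ℝ) : ℂ))) * (B₁ : ℂ)
        + (-1 + Complex.exp (Complex.I * ((2 * (p + q) : ℝ) : ℂ))) * (B₂ : ℂ)‖
      = 4 * |cos q * (sin (p - q) * B₁)| := by
  rw [side_sum_eq h, norm_mul, norm_mul, mul_comm Complex.I (p : ℂ), Complex.norm_exp_ofReal_mul_I,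
    Complex.norm_real, norm_mul, Complex.norm_I]
  norm_num

theorem cos_sub_cos_mul_add_eq {p q B₁ B₂ : ℝ} (h : sin (p - q) * B₁ = sin (p + q) * B₂) :
    (cos (2 * q) - cos (2 * p)) * (B₁ + B₂) = 4 * sin p * cos q * (sin (p - q) * B₁) := by
  have hprod : cos (2 * q) - cos (2 * p) = 2 * sin (p + q) * sin (p - q) := by
    rw [cos_sub_cos, show (2 * q + 2 * p) / 2 = p + q by ring,
      show (2 * q - 2 * p) / 2 = -(p - q) by ring, sin_neg]
    ring
  have hsum : sin (p - q) + sin (p + q) = 2 * sin p * cos q := by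
    rw [sin_sub, sin_add]; ring
  linear_combination (B₁ + B₂) * hprod - 2 * sin (p - q) * h + 2 * (sin (p - q) * B₁) * hsum

theorem beta_values_side_length_ratio_general
    (n : ℕ) (hn : 7 ≤ n)
    (B₁ B₂ : ℝ)
    (hB₁ : B₁ = eulerBeta (2 / 5 - 1 / (2 * n)) (1 / n))
    (hB₂ : B₂ = eulerBeta (3 / 5 - 1 / (2 * n)) (1 / n)) :
    ‖((-1 + Complex.exp (Complex.I * ((4 * π / 5 - π / n : ℝ) : ℂ))) * (B₁ : ℂ)
          + (-1 + Complex.exp (Complex.I * ((6 * π / 5 - π / n : ℝ) : ℂ))) * (B₂ : ℂ))‖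
      = ((Real.cos (π / n) + Real.cos (π / 5)) / Real.cos (π / (2 * n))) * (B₁ + B₂) := by
  have hn₇ : (7 : ℝ) ≤ n := by exact_mod_cast hn
  have ha : 0 < 2 / 5 - 1 / (2 * n : ℝ) := by
    rw [sub_pos, div_lt_div_iff₀ (by positivity) (by norm_num)]
    linarith
  set p := π / 2 - π / (2 * n) with hp
  set q := π / 10 with hq
  have hpq : p - q = π * (2 / 5 - 1 / (2 * n)) := by ring
  have hpq₀ : 0 < p - q := by rw [hpq]; positivity
  have hp₀ : 0 < p := by linarith [pi_pos]
  have hpπ : p < π := by linarith [pi_pos, show 0 < π / (2 * n) by positivity]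
  have hrel : sin (p - q) * B₁ = sin (p + q) * B₂ := by
    rw [hB₁, hB₂, hpq, show p + q = π * (3 / 5 - 1 / (2 * n)) by ring]
    exact sin_pi_mul_mul_eulerBeta_eq ha (by positivity) (by linarith) (by field_simp; ring)
  have hpos : 0 < cos q * (sin (p - q) * B₁) := by
    have := eulerBeta_pos ha (b := 1 / n) (by positivity)
    have := sin_pos_of_pos_of_lt_pi hpq₀ (by linarith [pi_pos])
    have := cos_pos_of_mem_Ioo (x := q) ⟨by linarith [pi_pos], by linarith [pi_pos]⟩
    rw [hB₁]; positivity
  have hsin : cos (π / (2 * n)) = sin p := (sin_pi_div_two_sub _).symm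
  have hcos : cos (π / n) + cos (π / 5) = cos (2 * q) - cos (2 * p) := by
    rw [show 2 * p = π - π / n by ring, cos_pi_sub, show 2 * q = π / 5 by ring]
    ring
  rw [show 4 * π / 5 - π / n = 2 * (p - q) by ring,
    show 6 * π / 5 - π / n = 2 * (p + q) by ring, norm_side_sum hrel, hcos,
    hsin, div_mul_eq_mul_div, cos_sub_cos_mul_add_eq hrel, abs_of_pos hpos]
  field_simp [(sin_pos_of_pos_of_lt_pi hp₀ hpπ).ne']

/-- For `n ≥ 7` odd, `5 ∤ n`, with `B₁ = B(2/5 − 1/2n, 1/n)` and `B₂ = B(3/5 − 1/2n, 1/n)`: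
`|(−1 + ζ₅²ζ₂ₙ⁻¹)·B₁ + (−1 + ζ₅³ζ₂ₙ⁻¹)·B₂| = ((cos(π/n) + cos(π/5))/cos(π/2n))·(B₁ + B₂)`,
where `ζ₅²ζ₂ₙ⁻¹ = e^{i(4π/5 − π/n)}` and `ζ₅³ζ₂ₙ⁻¹ = e^{i(6π/5 − π/n)}`. -/
theorem beta_values_side_length_ratio
    (n : ℕ) (hn : 7 ≤ n) (hodd : Odd n) (h5 : ¬ (5 ∣ n))
    (B₁ B₂ : ℝ)
    (hB₁ : B₁ = eulerBeta (2 / 5 - 1 / (2 * n)) (1 / n))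
    (hB₂ : B₂ = eulerBeta (3 / 5 - 1 / (2 * n)) (1 / n)) :
    ‖((-1 + Complex.exp (Complex.I * ((4 * π / 5 - π / n : ℝ) : ℂ))) * (B₁ : ℂ)
          + (-1 + Complex.exp (Complex.I * ((6 * π / 5 - π / n : ℝ) : ℂ))) * (B₂ : ℂ))‖
      = ((Real.cos (π / n) + Real.cos (π / 5)) / Real.cos (π / (2 * n))) * (B₁ + B₂) :=
  beta_values_side_length_ratio_general n hn B₁ B₂ hB₁ hB₂

end
end

section
/- Let m ≥ 2 be an even integer, let ζ = e^{iπ/m}, let z be a nonzero complex number, and set u = ζ⁻¹z + ζ/z. Then (i) u − 2 = (z − ζ)²/(ζz), and (ii) i · z^{m/2} · ∏_{k=1}^{m/2} ( u − 2cos((2k−1)π/m) ) = z^m − 1. -/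
/-! With `a = ζ^(2k-1)`, the `k`-th cosine term is `a + a⁻¹` and the `k`-th factor is
`ζ⁻¹z + ζ/z - (a + a⁻¹) = (z - aζ)(z - a⁻¹ζ)/(ζz)`; part (i) is the case `a = 1`.
The roots `aζ = ω^k` and `a⁻¹ζ = ω^(1-k)`, where `ω = ζ²` is a primitive `m`-th root of unity,
run once through all `m`-th roots of unity as `k` runs over `1, …, m/2`, so the numerators
multiply to `z^m - 1`, while the denominators multiply to `(ζz)^(m/2) = i z^(m/2)`. -/

open Real Finset

section Field

variable {K : Type*} [Field K]

theorem inv_mul_add_div_sub_add_inv {ζ z a : K} (hζ : ζ ≠ 0) (hz : z ≠ 0) (ha : a ≠ 0) :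
    ζ⁻¹ * z + ζ / z - (a + a⁻¹) = (z - a * ζ) * (z - a⁻¹ * ζ) / (ζ * z) := by
  field_simp
  ring

theorem Finset.prod_Ico_one_eq_prod_range_of_eq {M : Type*} [CommMonoid M] (f : ℕ → M) {n : ℕ}
    (hf : f n = f 0) : ∏ i ∈ Ico 1 (n + 1), f i = ∏ i ∈ range n, f i := by
  rw [prod_Ico_eq_prod_range, add_tsub_cancel_right]
  rcases n with _ | n
  · simp
  · rw [prod_range_succ, prod_range_succ', add_comm 1, hf]
    simp only [add_comm 1]

theorem IsPrimitiveRoot.prod_range_sub_pow {ω : K} {n : ℕ} (hω : IsPrimitiveRoot ω n)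
    (hn : 0 < n) (z : K) : ∏ i ∈ range n, (z - ω ^ i) = z ^ n - 1 := by
  simpa [Polynomial.eval_prod] using
    (congrArg (Polynomial.eval z) (X_pow_sub_C_eq_prod hω hn (one_pow n))).symm

theorem IsPrimitiveRoot.prod_Icc_sub_pow_mul_sub_pow {ω : K} {h : ℕ}
    (hω : IsPrimitiveRoot ω (2 * h)) (hh : 0 < h) (z : K) :
    ∏ k ∈ Icc 1 h, (z - ω ^ k) * (z - ω ^ (2 * h + 1 - k)) = z ^ (2 * h) - 1 := by
  have hreflect : ∏ k ∈ Ico 1 (h + 1), (z - ω ^ (2 * h + 1 - k))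
      = ∏ k ∈ Ico (h + 1) (2 * h + 1), (z - ω ^ k) := by
    rw [prod_Ico_reflect (fun k => z - ω ^ k) 1 (by omega)]
    congr 2
    omega
  rw [prod_mul_distrib, ← Ico_add_one_right_eq_Icc, hreflect,
    prod_Ico_consecutive _ (by omega) (by omega),
    prod_Ico_one_eq_prod_range_of_eq (fun k => z - ω ^ k) (by simp [hω.pow_eq_one]),
    hω.prod_range_sub_pow (by omega)]

theorem mul_pow_mul_prod_inv_mul_add_div_sub_odd_pow {ζ z : K} {h : ℕ}
    (hζ : IsPrimitiveRoot (ζ ^ 2) (2 * h)) (hh : 0 < h) (hz : z ≠ 0) :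
    (ζ * z) ^ h * ∏ k ∈ Icc 1 h, (ζ⁻¹ * z + ζ / z - (ζ ^ (2 * k - 1) + (ζ ^ (2 * k - 1))⁻¹))
      = z ^ (2 * h) - 1 := by
  have hζ0 : ζ ≠ 0 := ne_zero_pow two_ne_zero (hζ.ne_zero (by omega))
  have factor : ∀ k ∈ Icc 1 h,
      ζ⁻¹ * z + ζ / z - (ζ ^ (2 * k - 1) + (ζ ^ (2 * k - 1))⁻¹)
        = (z - (ζ ^ 2) ^ k) * (z - (ζ ^ 2) ^ (2 * h + 1 - k)) / (ζ * z) := by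
    intro k hk
    have hk : 1 ≤ k ∧ k ≤ h := mem_Icc.mp hk
    have hroot : ζ ^ (2 * k - 1) * ζ = (ζ ^ 2) ^ k := by
      rw [← pow_succ, ← pow_mul]
      congr 1
      omega
    -- `ζ ^ (4 * h) = 1` turns the inverse of `ζ ^ (2 * k - 1)` into a positive power
    have hroot' : (ζ ^ (2 * k - 1))⁻¹ * ζ = (ζ ^ 2) ^ (2 * h + 1 - k) := by
      rw [inv_mul_eq_iff_eq_mul₀ (pow_ne_zero _ hζ0), ← pow_mul, ← pow_add,
        show 2 * k - 1 + 2 * (2 * h + 1 - k) = 1 + 2 * (2 * h) by omega, pow_add, pow_mul,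
        hζ.pow_eq_one, pow_one, mul_one]
    rw [inv_mul_add_div_sub_add_inv hζ0 hz (pow_ne_zero _ hζ0), hroot, hroot']
  rw [prod_congr rfl factor, prod_div_distrib, prod_const, Nat.card_Icc, add_tsub_cancel_right,
    hζ.prod_Icc_sub_pow_mul_sub_pow hh, mul_div_cancel₀ _ (pow_ne_zero _ (mul_ne_zero hζ0 hz))]

end Field

section Complex

open Complex

theorem exp_pi_mul_I_div_pow (m n : ℕ) :
    exp (I * π / m) ^ n = exp ((n * π / m : ℝ) * I) := by
  rw [← Complex.exp_nat_mul]
  push_cast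
  ring_nf

theorem isPrimitiveRoot_exp_pi_mul_I_div_sq {m : ℕ} (hm : m ≠ 0) :
    IsPrimitiveRoot (exp (I * π / m) ^ 2) m := by
  convert Complex.isPrimitiveRoot_exp m hm using 1
  rw [exp_pi_mul_I_div_pow]
  push_cast
  ring_nf

theorem exp_pi_mul_I_div_two_mul_pow {h : ℕ} (hh : h ≠ 0) :
    exp (I * π / (2 * h : ℕ)) ^ h = I := by
  rw [exp_pi_mul_I_div_pow]
  convert exp_pi_div_two_mul_I using 3
  push_cast
  field_simp

theorem two_cos_eq_exp_pi_mul_I_div_pow_add_inv (m : ℕ) {k : ℕ} (hk : 1 ≤ k) :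
    ((2 * Real.cos ((2 * k - 1) * π / m) : ℝ) : ℂ)
      = exp (I * π / m) ^ (2 * k - 1) + (exp (I * π / m) ^ (2 * k - 1))⁻¹ := by
  rw [exp_pi_mul_I_div_pow, ← Complex.exp_neg, Nat.cast_sub (by omega)]
  push_cast
  rw [two_cos]
  ring_nf

end Complex

/-- For `m ≥ 2` even, `ζ = e^{iπ/m}`, `z ≠ 0` and `u = ζ⁻¹z + ζ/z`:
(i) `u − 2 = (z − ζ)²/(ζz)`, and
(ii) `i·z^{m/2}·∏_{k=1}^{m/2} (u − 2cos((2k−1)π/m)) = z^m − 1`. -/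
theorem zpow_sub_one_factorization_even
    (m : ℕ) (hm : 2 ≤ m) (heven : Even m)
    (ζ z u : ℂ) (hζ : ζ = Complex.exp (Complex.I * ((π : ℝ) : ℂ) / m))
    (hz : z ≠ 0) (hu : u = ζ⁻¹ * z + ζ / z) :
    u - 2 = (z - ζ) ^ 2 / (ζ * z) ∧
    Complex.I * z ^ (m / 2) *
        ∏ k ∈ Finset.Icc 1 (m / 2),
          (u - ((2 * Real.cos ((2 * (k : ℝ) - 1) * π / m) : ℝ) : ℂ))
      = z ^ m - 1 := by
  obtain ⟨h, rfl⟩ := heven.two_dvd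
  have hh : 0 < h := by omega
  have hprim : IsPrimitiveRoot (ζ ^ 2) (2 * h) := hζ ▸ isPrimitiveRoot_exp_pi_mul_I_div_sq (by omega)
  have hI : ζ ^ h = Complex.I := hζ ▸ exp_pi_mul_I_div_two_mul_pow hh.ne'
  have hζ0 : ζ ≠ 0 := hζ ▸ Complex.exp_ne_zero _
  subst hu
  constructor
  · simpa [sq, one_add_one_eq_two] using inv_mul_add_div_sub_add_inv hζ0 hz one_ne_zero
  · rw [Nat.mul_div_cancel_left h two_pos, ← hI, ← mul_pow,
      ← mul_pow_mul_prod_inv_mul_add_div_sub_odd_pow hprim hh hz]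
    congr 1
    refine prod_congr rfl fun k hk => ?_
    rw [hζ, two_cos_eq_exp_pi_mul_I_div_pow_add_inv _ (mem_Icc.mp hk).1]
end
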